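/- arXiv:2106.05419 — 3 statements merged into one kernel-verified Lean document; each statement's English description precedes it below -/
import Mathlib

section
/- Let G be a real m×n matrix and Z a real m×k matrix with GᵀZ = 0, and let D be the m×m diagonal matrix with diagonal entries d₁,…,d_m satisfying 0 < κmin ≤ dᵢ ≤ κmax for all i; set η = κmax/κmin. Then for all u ∈ ℝⁿ and w ∈ ℝᵏ, 2·|uᵀGᵀDZw| ≤ (1 − 1/η)·(uᵀGᵀDGu + wᵀZᵀDZw). -/
/-!
Since `Gᵀ Z = 0`, the vectors `x = G u` and `y = Z w` are orthogonal, so in the cross term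
`xᵀ D y` the weights `dᵢ` may be replaced by `dᵢ - κmin ≥ 0`. Cauchy–Schwarz (AM–GM) for this
nonnegative diagonal form bounds twice the cross term by `xᵀ (D - κmin) x + yᵀ (D - κmin) y`,
and `dᵢ - κmin ≤ (1 - κmin / κmax) dᵢ` because `dᵢ ≤ κmax`.
-/

open Matrix

theorem dotProduct_transpose_mul_mulVec {ι m n R : Type*} [Fintype ι] [Fintype m] [Fintype n]
    [CommSemiring R] (A : Matrix ι m R) (M : Matrix ι n R) (u : m → R) (v : n → R) :
    u ⬝ᵥ ((Aᵀ * M) *ᵥ v) = (A *ᵥ u) ⬝ᵥ (M *ᵥ v) := by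
  rw [← mulVec_mulVec, dotProduct_mulVec, vecMul_transpose]

section

variable {ι R : Type*} [Fintype ι] [DecidableEq ι]

theorem dotProduct_diagonal_mulVec [CommSemiring R] (e x y : ι → R) :
    x ⬝ᵥ (diagonal e *ᵥ y) = ∑ i, e i * (x i * y i) := by
  simp only [dotProduct, mulVec_diagonal]
  exact Finset.sum_congr rfl fun i _ => by ring

theorem dotProduct_diagonal_sub_const_mulVec [CommRing R] {x y : ι → R} (hxy : x ⬝ᵥ y = 0)
    (d : ι → R) (c : R) : x ⬝ᵥ (diagonal (fun i => d i - c) *ᵥ y) = x ⬝ᵥ (diagonal d *ᵥ y) := by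
  rw [← diagonal_sub, sub_mulVec, dotProduct_sub, ← smul_one_eq_diagonal, smul_mulVec,
    one_mulVec, dotProduct_smul, hxy, smul_zero, sub_zero]

theorem two_mul_abs_mul_le_add_mul_self [CommRing R] [LinearOrder R] [IsStrictOrderedRing R]
    (a b : R) : 2 * |a * b| ≤ a * a + b * b := by
  simpa only [abs_mul, mul_assoc, sq, abs_mul_abs_self] using two_mul_le_add_sq |a| |b|

theorem two_mul_abs_dotProduct_diagonal_mulVec_le [CommRing R] [LinearOrder R]
    [IsStrictOrderedRing R] {e : ι → R} (he : ∀ i, 0 ≤ e i) (x y : ι → R) :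
    2 * |x ⬝ᵥ (diagonal e *ᵥ y)| ≤ x ⬝ᵥ (diagonal e *ᵥ x) + y ⬝ᵥ (diagonal e *ᵥ y) := by
  simp only [dotProduct_diagonal_mulVec, ← Finset.sum_add_distrib, ← mul_add]
  calc 2 * |∑ i, e i * (x i * y i)| ≤ 2 * ∑ i, e i * |x i * y i| := by
        gcongr
        refine (Finset.abs_sum_le_sum_abs _ _).trans_eq (Finset.sum_congr rfl fun i _ => ?_)
        rw [abs_mul, abs_of_nonneg (he i)]
    _ ≤ ∑ i, e i * (x i * x i + y i * y i) := by
        rw [Finset.mul_sum]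
        refine Finset.sum_le_sum fun i _ => ?_
        rw [mul_left_comm]
        exact mul_le_mul_of_nonneg_left (two_mul_abs_mul_le_add_mul_self (x i) (y i)) (he i)

theorem dotProduct_diagonal_mulVec_self_le [CommRing R] [LinearOrder R] [IsStrictOrderedRing R]
    {e d : ι → R} {c : R} (h : ∀ i, e i ≤ c * d i) (x : ι → R) :
    x ⬝ᵥ (diagonal e *ᵥ x) ≤ c * x ⬝ᵥ (diagonal d *ᵥ x) := by
  simp only [dotProduct_diagonal_mulVec, Finset.mul_sum]
  refine Finset.sum_le_sum fun i _ => ?_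
  rw [← mul_assoc c]
  exact mul_le_mul_of_nonneg_right (h i) (mul_self_nonneg _)

end

theorem sub_le_one_sub_one_div_div_mul {K : Type*} [Field K] [LinearOrder K]
    [IsStrictOrderedRing K] {a b t : K} (ha : 0 < a) (hat : a ≤ t) (htb : t ≤ b) :
    t - a ≤ (1 - 1 / (b / a)) * t := by
  have hb : 0 < b := ha.trans_le (hat.trans htb)
  rw [one_div_div, sub_mul, one_mul, sub_le_sub_iff_left, div_mul_eq_mul_div, div_le_iff₀ hb]
  exact mul_le_mul_of_nonneg_left htb ha.le

/-- With `GᵀZ = 0` and `D = diag(d)` where `0 < κmin ≤ dᵢ ≤ κmax`,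
setting `η = κmax/κmin`, we have for all `u, w`:
`2·|uᵀGᵀDZw| ≤ (1 - 1/η)·(uᵀGᵀDGu + wᵀZᵀDZw)`. -/
theorem cross_term_estimate {m n k : ℕ}
    (G : Matrix (Fin m) (Fin n) ℝ) (Z : Matrix (Fin m) (Fin k) ℝ)
    (hGZ : Gᵀ * Z = 0)
    (d : Fin m → ℝ) (κmin κmax : ℝ) (hκmin : 0 < κmin)
    (hd : ∀ i, κmin ≤ d i ∧ d i ≤ κmax) :
    ∀ (u : Fin n → ℝ) (w : Fin k → ℝ),
      2 * |u ⬝ᵥ ((Gᵀ * Matrix.diagonal d * Z) *ᵥ w)| ≤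
        (1 - 1 / (κmax / κmin)) *
          (u ⬝ᵥ ((Gᵀ * Matrix.diagonal d * G) *ᵥ u) +
            w ⬝ᵥ ((Zᵀ * Matrix.diagonal d * Z) *ᵥ w)) := by
  intro u w
  set x := G *ᵥ u
  set y := Z *ᵥ w
  set c := 1 - 1 / (κmax / κmin)
  have horth : x ⬝ᵥ y = 0 := by
    rw [← dotProduct_transpose_mul_mulVec, hGZ, zero_mulVec, dotProduct_zero]
  have hweight : ∀ i, d i - κmin ≤ c * d i := fun i =>
    sub_le_one_sub_one_div_div_mul hκmin (hd i).1 (hd i).2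
  simp only [Matrix.mul_assoc, dotProduct_transpose_mul_mulVec]
  simp only [← mulVec_mulVec]
  set e : Fin m → ℝ := fun i => d i - κmin
  calc 2 * |x ⬝ᵥ (diagonal d *ᵥ y)|
      = 2 * |x ⬝ᵥ (diagonal e *ᵥ y)| := by rw [dotProduct_diagonal_sub_const_mulVec horth]
    _ ≤ x ⬝ᵥ (diagonal e *ᵥ x) + y ⬝ᵥ (diagonal e *ᵥ y) :=
        two_mul_abs_dotProduct_diagonal_mulVec_le (fun i => sub_nonneg.2 (hd i).1) x y
    _ ≤ c * (x ⬝ᵥ (diagonal d *ᵥ x)) + c * (y ⬝ᵥ (diagonal d *ᵥ y)) :=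
        add_le_add (dotProduct_diagonal_mulVec_self_le hweight x)
          (dotProduct_diagonal_mulVec_self_le hweight y)
    _ = c * (x ⬝ᵥ (diagonal d *ᵥ x) + y ⬝ᵥ (diagonal d *ᵥ y)) := (mul_add _ _ _).symm
end

section
/- Let G be a real m×n matrix and Z a real m×k matrix with GᵀZ = 0, and let D be the m×m diagonal matrix with diagonal entries d₁,…,d_m satisfying 0 < κmin ≤ dᵢ ≤ κmax for all i; set η = κmax/κmin. With s(u,w) = uᵀGᵀDGu + wᵀZᵀDZw and q(u,w) = s(u,w) + 2·uᵀGᵀDZw, for any pairs (u,w) and (u',w') with q(u,w) > 0 and s(u',w') > 0 one has (s(u,w)/q(u,w)) · (q(u',w')/s(u',w')) ≤ 2η − 1. In other words, the condition number of the preconditioned operator M⁻¹A, measured as the ratio of the extreme generalized Rayleigh quotients of A with respect to M, is at most 2η − 1. -/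
/-!
Write `x = G u` and `y = Z w`, so that `s = Σ dᵢ (xᵢ² + yᵢ²)` and `q = Σ dᵢ (xᵢ + yᵢ)²`, where
`x ⬝ y = 0` because `GᵀZ = 0`. Orthogonality makes `|x ± y|² = |x|² + |y|² =: N`, and the weights
squeeze every weighted norm between `κmin` and `κmax` times the plain one. Hence
`q ≥ κmin N ≥ (κmin/κmax) s`, and by the parallelogram law
`q = 2s - Σ dᵢ (xᵢ - yᵢ)² ≤ 2s - κmin N ≤ (2 - κmin/κmax) s`. Multiplying the two bounds on
`s/q` and `q/s` gives `η (2 - 1/η) = 2η - 1`.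
-/

open Matrix

section WeightedNorm

variable {ι : Type*} [Fintype ι]

def weightedNormSq (d x : ι → ℝ) : ℝ := ∑ i, d i * x i ^ 2

theorem weightedNormSq_add (d x y : ι → ℝ) :
    weightedNormSq d (x + y) =
      weightedNormSq d x + weightedNormSq d y + 2 * ∑ i, d i * (x i * y i) := by
  simp only [weightedNormSq, Pi.add_apply, Finset.mul_sum, ← Finset.sum_add_distrib]
  exact Finset.sum_congr rfl fun i _ => by ring

theorem weightedNormSq_sub (d x y : ι → ℝ) :
    weightedNormSq d (x - y) =
      weightedNormSq d x + weightedNormSq d y - 2 * ∑ i, d i * (x i * y i) := by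
  simp only [weightedNormSq, Pi.sub_apply, Finset.mul_sum, ← Finset.sum_add_distrib,
    ← Finset.sum_sub_distrib]
  exact Finset.sum_congr rfl fun i _ => by ring

theorem mul_dotProduct_self_le_weightedNormSq {a : ℝ} {d : ι → ℝ} (hd : ∀ i, a ≤ d i)
    (x : ι → ℝ) : a * (x ⬝ᵥ x) ≤ weightedNormSq d x := by
  rw [dotProduct, Finset.mul_sum]
  exact Finset.sum_le_sum fun i _ => by
    rw [sq]; exact mul_le_mul_of_nonneg_right (hd i) (mul_self_nonneg _)

theorem weightedNormSq_le_mul_dotProduct_self {b : ℝ} {d : ι → ℝ} (hd : ∀ i, d i ≤ b)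
    (x : ι → ℝ) : weightedNormSq d x ≤ b * (x ⬝ᵥ x) := by
  rw [dotProduct, Finset.mul_sum]
  exact Finset.sum_le_sum fun i _ => by
    rw [sq]; exact mul_le_mul_of_nonneg_right (hd i) (mul_self_nonneg _)

theorem dotProduct_self_add_of_dotProduct_eq_zero {x y : ι → ℝ} (hxy : x ⬝ᵥ y = 0) :
    (x + y) ⬝ᵥ (x + y) = x ⬝ᵥ x + y ⬝ᵥ y := by
  simp only [add_dotProduct, dotProduct_add, dotProduct_comm y x, hxy]; ring

theorem dotProduct_self_sub_of_dotProduct_eq_zero {x y : ι → ℝ} (hxy : x ⬝ᵥ y = 0) :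
    (x - y) ⬝ᵥ (x - y) = x ⬝ᵥ x + y ⬝ᵥ y := by
  simp only [sub_dotProduct, dotProduct_sub, dotProduct_comm y x, hxy]; ring

theorem weightedNormSq_add_bounds {a b : ℝ} {d x y : ι → ℝ} (ha : 0 ≤ a)
    (hd : ∀ i, a ≤ d i ∧ d i ≤ b) (hxy : x ⬝ᵥ y = 0) :
    a * (weightedNormSq d x + weightedNormSq d y) ≤ b * weightedNormSq d (x + y) ∧
      b * weightedNormSq d (x + y) ≤ (2 * b - a) * (weightedNormSq d x + weightedNormSq d y) := by
  rcases isEmpty_or_nonempty ι with _ | ⟨⟨i⟩⟩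
  · simp [weightedNormSq]
  have hb : 0 ≤ b := ha.trans ((hd i).1.trans (hd i).2)
  have hle := add_le_add (weightedNormSq_le_mul_dotProduct_self (fun i => (hd i).2) x)
    (weightedNormSq_le_mul_dotProduct_self (fun i => (hd i).2) y)
  have hadd := mul_dotProduct_self_le_weightedNormSq (fun i => (hd i).1) (x + y)
  have hsub := mul_dotProduct_self_le_weightedNormSq (fun i => (hd i).1) (x - y)
  rw [dotProduct_self_add_of_dotProduct_eq_zero hxy] at hadd
  rw [dotProduct_self_sub_of_dotProduct_eq_zero hxy, weightedNormSq_sub] at hsub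
  rw [weightedNormSq_add] at hadd ⊢
  constructor
  · nlinarith [mul_le_mul_of_nonneg_left hle ha, mul_le_mul_of_nonneg_left hadd hb]
  · nlinarith [mul_le_mul_of_nonneg_left hle ha, mul_le_mul_of_nonneg_left hsub hb]

end WeightedNorm

theorem dotProduct_transpose_mul_diagonal_mul_mulVec {m p r : Type*} [Fintype m] [Fintype p]
    [Fintype r] [DecidableEq m] (d : m → ℝ) (P : Matrix m p ℝ) (Q : Matrix m r ℝ)
    (a : p → ℝ) (b : r → ℝ) :
    a ⬝ᵥ ((Pᵀ * diagonal d * Q) *ᵥ b) = ∑ i, d i * ((P *ᵥ a) i * (Q *ᵥ b) i) := by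
  rw [Matrix.mul_assoc, ← mulVec_mulVec, dotProduct_mulVec, vecMul_transpose, ← mulVec_mulVec]
  simp only [dotProduct, mulVec_diagonal]
  exact Finset.sum_congr rfl fun i _ => by ring

theorem mulVec_dotProduct_mulVec_eq_zero {m p r : Type*} [Fintype m] [Fintype p] [Fintype r]
    {P : Matrix m p ℝ} {Q : Matrix m r ℝ} (hPQ : Pᵀ * Q = 0) (a : p → ℝ) (b : r → ℝ) :
    (P *ᵥ a) ⬝ᵥ (Q *ᵥ b) = 0 := by
  rw [← vecMul_transpose, ← dotProduct_mulVec, mulVec_mulVec, hPQ, zero_mulVec, dotProduct_zero]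

theorem div_mul_div_le_two_mul_div_sub_one {a b s q s' q' : ℝ} (ha : 0 < a) (hq : 0 < q)
    (hs' : 0 < s') (h : a * s ≤ b * q) (h₁' : a * s' ≤ b * q') (h₂' : b * q' ≤ (2 * b - a) * s') :
    s / q * (q' / s') ≤ 2 * (b / a) - 1 := by
  have hab : a ≤ b := by nlinarith
  have hb : 0 < b := ha.trans_le hab
  have hq' : 0 < q' := by nlinarith
  calc s / q * (q' / s') ≤ b / a * ((2 * b - a) / b) :=
        mul_le_mul ((div_le_div_iff₀ hq ha).mpr (by linarith))
          ((div_le_div_iff₀ hs' hb).mpr (by linarith)) (by positivity) (by positivity)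
    _ = 2 * (b / a) - 1 := by field_simp

/-- With `GᵀZ = 0`, `D = diag(d)`, `0 < κmin ≤ dᵢ ≤ κmax`, `η = κmax/κmin`,
`s(u,w) = uᵀGᵀDGu + wᵀZᵀDZw` and `q(u,w) = s(u,w) + 2·uᵀGᵀDZw`, for any pairs `(u,w)` and
`(u',w')` with `q(u,w) > 0` and `s(u',w') > 0` one has
`(s(u,w)/q(u,w)) · (q(u',w')/s(u',w')) ≤ 2η - 1`. -/
theorem condition_number_bound {m n k : ℕ}
    (G : Matrix (Fin m) (Fin n) ℝ) (Z : Matrix (Fin m) (Fin k) ℝ)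
    (hGZ : Gᵀ * Z = 0)
    (d : Fin m → ℝ) (κmin κmax : ℝ) (hκmin : 0 < κmin)
    (hd : ∀ i, κmin ≤ d i ∧ d i ≤ κmax)
    (s q : (Fin n → ℝ) → (Fin k → ℝ) → ℝ)
    (hs : ∀ u w, s u w = u ⬝ᵥ ((Gᵀ * Matrix.diagonal d * G) *ᵥ u) +
        w ⬝ᵥ ((Zᵀ * Matrix.diagonal d * Z) *ᵥ w))
    (hq : ∀ u w, q u w = s u w + 2 * (u ⬝ᵥ ((Gᵀ * Matrix.diagonal d * Z) *ᵥ w))) :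
    ∀ (u : Fin n → ℝ) (w : Fin k → ℝ) (u' : Fin n → ℝ) (w' : Fin k → ℝ),
      0 < q u w → 0 < s u' w' →
        (s u w / q u w) * (q u' w' / s u' w') ≤ 2 * (κmax / κmin) - 1 := by
  intro u w u' w' hq₀ hs₀
  have hs_eq : ∀ u w, s u w = weightedNormSq d (G *ᵥ u) + weightedNormSq d (Z *ᵥ w) := by
    intro u w
    simp only [hs, dotProduct_transpose_mul_diagonal_mul_mulVec, weightedNormSq, sq]
  have hq_eq : ∀ u w, q u w = weightedNormSq d (G *ᵥ u + Z *ᵥ w) := by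
    intro u w
    rw [hq, hs_eq, dotProduct_transpose_mul_diagonal_mul_mulVec, weightedNormSq_add]
  obtain ⟨h, -⟩ := weightedNormSq_add_bounds hκmin.le hd (mulVec_dotProduct_mulVec_eq_zero hGZ u w)
  obtain ⟨h₁', h₂'⟩ :=
    weightedNormSq_add_bounds hκmin.le hd (mulVec_dotProduct_mulVec_eq_zero hGZ u' w')
  rw [← hs_eq, ← hq_eq] at h h₁' h₂'
  exact div_mul_div_le_two_mul_div_sub_one hκmin hq₀ hs₀ h h₁' h₂'
end

section
/- Let m, n, k be natural numbers with n + k = m. Let D be a symmetric positive definite real m×m matrix, G a real m×n matrix with rank G = n, and Z a real m×k matrix with rank Z = k, and suppose GᵀZ = 0. Then the m×m matrix [DG Z], whose first n columns are those of DG and whose last k columns are those of Z, is invertible. -/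
/-!
If `DGu + Zw = 0`, multiplying by `Gᵀ` kills `Zw` and leaves `GᵀDGu = 0`; since `D` is positive
definite and `G` has full column rank, `GᵀDG` is positive definite, so `u = 0`. Then `Zw = 0`,
and `w = 0` because `Z` has full column rank. Hence `[DG Z]` has trivial kernel.
-/

open Matrix

namespace Matrix

variable {l m n k K : Type*} [Fintype n] [Fintype k]

theorem mulVec_injective_of_rank_eq_card [Field K] {A : Matrix m n K}
    (hA : A.rank = Fintype.card n) : Function.Injective A.mulVec := by
  rw [mulVec_injective_iff, linearIndependent_iff_card_eq_finrank_span, ← hA,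
    rank_eq_finrank_span_cols]
  rfl

theorem fromCols_mulVec_injective [Fintype m] [CommRing K] {A : Matrix m n K}
    {B : Matrix m k K} (C : Matrix l m K) (hCA : Function.Injective (C * A).mulVec)
    (hCB : C * B = 0) (hB : Function.Injective B.mulVec) :
    Function.Injective (fromCols A B).mulVec := by
  refine (injective_iff_map_eq_zero (fromCols A B).mulVecLin).2 fun v hv => ?_
  rw [mulVecLin_apply, fromCols_mulVec] at hv
  have hu : v ∘ Sum.inl = 0 := hCA <| by
    rw [mulVec_zero, ← mulVec_mulVec, ← add_sub_cancel_right (A *ᵥ _) (B *ᵥ v ∘ Sum.inr), hv,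
      zero_sub, mulVec_neg, mulVec_mulVec, hCB, zero_mulVec, neg_zero]
  have hw : v ∘ Sum.inr = 0 := hB <| by simpa [hu] using hv
  ext (i | i)
  · exact congrFun hu i
  · exact congrFun hw i

theorem PosDef.fromCols_mul_mulVec_injective [Fintype m] [DecidableEq n] [Field K]
    [PartialOrder K] [StarRing K] {D : Matrix m m K} (hD : D.PosDef) {G : Matrix m n K}
    {Z : Matrix m k K} (hG : Function.Injective G.mulVec) (hZ : Function.Injective Z.mulVec)
    (hGZ : Gᴴ * Z = 0) : Function.Injective (fromCols (D * G) Z).mulVec := by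
  have hGDG : IsUnit (Gᴴ * (D * G)) := by
    simpa only [Matrix.mul_assoc] using (hD.conjTranspose_mul_mul_same hG).isUnit
  exact fromCols_mulVec_injective Gᴴ (mulVec_injective_of_isUnit hGDG) hGZ hZ

end Matrix

/-- If `n + k = m`, `D` is symmetric positive definite, `rank G = n`,
`rank Z = k` and `GᵀZ = 0`, then the square matrix `[DG Z]` is invertible. -/
theorem range_space_scaled_matrix_isUnit {m n k : ℕ} (hmk : n + k = m)
    (D : Matrix (Fin m) (Fin m) ℝ) (hD : D.PosDef)
    (G : Matrix (Fin m) (Fin n) ℝ) (Z : Matrix (Fin m) (Fin k) ℝ)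
    (hG : G.rank = n) (hZ : Z.rank = k) (hGZ : Gᵀ * Z = 0) :
    IsUnit ((Matrix.fromCols (D * G) Z).submatrix (id : Fin m → Fin m)
      ((finSumFinEquiv.trans (finCongr hmk)).symm : Fin m → Fin n ⊕ Fin k)) := by
  have hM := hD.fromCols_mul_mulVec_injective
    (mulVec_injective_of_rank_eq_card (hG.trans (Fintype.card_fin n).symm))
    (mulVec_injective_of_rank_eq_card (hZ.trans (Fintype.card_fin k).symm))
    (by rwa [conjTranspose_eq_transpose_of_trivial])
  rw [← mulVec_injective_iff_isUnit]
  intro v w hvw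
  rw [submatrix_mulVec_equiv, submatrix_mulVec_equiv] at hvw
  exact (finSumFinEquiv.trans (finCongr hmk)).symm.symm.surjective.injective_comp_right (hM hvw)
end
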